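/- For every n ≥ 1 and every subset I ⊆ {1,...,n−1}, the number of cyclic permutations π of {1,...,n+1} with D(π) ∩ {1,...,n−1} = I equals the number of permutations σ of {1,...,n} with D(σ) = I. -/

import Mathlib

def descSeq {n : ℕ} (f : Fin n → ℕ) : Finset ℕ :=
  (Finset.range (n - 1)).filter
    (fun i => ∃ h : i + 1 < n, f ⟨i + 1, h⟩ < f ⟨i, Nat.lt_of_succ_lt h⟩)

def descSet {n : ℕ} (σ : Equiv.Perm (Fin n)) : Finset ℕ :=
  descSeq (fun i => (σ i : ℕ))

def IsCyclic' {n : ℕ} (π : Equiv.Perm (Fin n)) : Prop :=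
  ∀ x y : Fin n, ∃ k : ℕ, (π ^ k) x = y

def compParts (n : ℕ) (I : Finset ℕ) : Multiset ℕ :=
  ↑(List.zipWith (· - ·) ((I.sort (· ≤ ·)).map (· + 1) ++ [n])
      (0 :: (I.sort (· ≤ ·)).map (· + 1)))

def fullCycleType {n : ℕ} (π : Equiv.Perm (Fin n)) : Multiset ℕ :=
  π.cycleType + Multiset.replicate (n - π.support.card) 1

def InT0 (n : ℕ) (τ : Fin n → ℕ) : Prop :=
  ∃ (π : Equiv.Perm (Fin n)) (k : Fin n), IsCyclic' π ∧
    τ = Function.update (fun i => ((π i : ℕ) + 1)) k 0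

def InU (n : ℕ) (τ : Fin n → ℕ) : Prop :=
  ∃ (π : Equiv.Perm (Fin n)) (k : Fin n), IsCyclic' π ∧
    τ = Function.update (fun i => ((π i : ℕ) + 1)) k (n + 1)

def extPerm {n : ℕ} (π : Equiv.Perm (Fin n)) : Equiv.Perm (Fin (n + 1)) :=
  (finSuccEquivLast (n := n)).symm.permCongr π.optionCongr

def extCycle {n : ℕ} (π : Equiv.Perm (Fin n)) (k : Fin n) : Equiv.Perm (Fin (n + 1)) :=
  extPerm π * Equiv.swap (Fin.castSucc k) (Fin.last n)


/-!
Gessel–Reutenauer style argument. For a set `J` of positions let `b_J p` be the number of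
elements of `J` below `p`. A permutation has all its descents in `J` iff it increases on every
block where `b_J` is constant, so standardization identifies these permutations with the
rearrangements of the monotone word `b_J`.

For a cyclic permutation `π` of `n + 1` points, record `b_K` with `K = J ∪ {n - 1}` along the
cycle, starting from the last point. The first letter is then the unique largest one, so the
cyclic shifts of this word are pairwise distinct, and `π` is recovered as the map sending the
lexicographic rank of each shift to the rank of the next one. This identifies the cyclic
permutations with descents in `K` with the rearrangements of `b_K` that begin with its largest
letter. Dropping that letter, both kinds of permutations are counted by the rearrangements of
`b_J`, for every `J`, and Möbius inversion over subsets turns these equalities of cumulative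
counts into the statement.
-/

open Finset Function
open Fin.NatCast
open scoped List

theorem eq_of_ofFn_perm_of_monotone {α : Type*} [PartialOrder α] {m : ℕ} {f g : Fin m → α}
    (h : List.ofFn f ~ List.ofFn g) (hf : Monotone f) (hg : Monotone g) : f = g :=
  List.ofFn_injective (h.eq_of_pairwise' hf.sortedLE_ofFn.pairwise hg.sortedLE_ofFn.pairwise)

theorem Pi.toLex_lt_toLex_iff_of_apply_zero_eq {α : Type*} [Preorder α] {x y : ℕ → α}
    (h : x 0 = y 0) :
    toLex x < toLex y ↔ toLex (fun i => x (i + 1)) < toLex (fun i => y (i + 1)) := by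
  constructor
  · rintro ⟨_ | k, hk, hlt⟩
    · exact absurd (show x 0 < y 0 from hlt) (h ▸ lt_irrefl _)
    · exact ⟨k, fun i hi => hk (i + 1) (by omega), hlt⟩
  · rintro ⟨k, hk, hlt⟩
    refine ⟨k + 1, fun i hi => ?_, hlt⟩
    rcases i with _ | i
    exacts [h, hk i (by omega)]

theorem Finset.eq_of_forall_sum_powerset_eq {α M : Type*} [DecidableEq α] [AddCancelCommMonoid M]
    {f g : Finset α → M}
    (h : ∀ K : Finset α, ∑ I ∈ K.powerset, f I = ∑ I ∈ K.powerset, g I) :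
    f = g := by
  funext K
  induction K using Finset.strongInduction with
  | H K ih =>
    have hproper : ∑ I ∈ K.powerset.erase K, f I = ∑ I ∈ K.powerset.erase K, g I := by
      refine sum_congr rfl fun I hI => ?_
      obtain ⟨hne, hsub⟩ := mem_erase.1 hI
      exact ih I (ssubset_of_subset_of_ne (mem_powerset.1 hsub) hne)
    have hsum := h K
    rw [← sum_erase_add _ _ (mem_powerset_self K), ← sum_erase_add _ _ (mem_powerset_self K),
      hproper] at hsum
    exact add_left_cancel hsum

theorem Nat.card_subtype_subset_eq_sum {α β : Type*} [Fintype α] [DecidableEq β]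
    (P : α → Prop) (f : α → Finset β) (K : Finset β) :
    Nat.card {a // P a ∧ f a ⊆ K} = ∑ I ∈ K.powerset, Nat.card {a // P a ∧ f a = I} := by
  classical
  simp only [Nat.card_eq_fintype_card, Fintype.card_subtype, ← filter_filter]
  rw [card_eq_sum_card_fiberwise (f := f) (t := K.powerset)
    fun a ha => mem_powerset.2 (mem_filter.1 ha).2]
  refine sum_congr rfl fun I hI => congrArg card ?_
  rw [filter_filter]
  exact filter_congr fun a _ => ⟨fun h => h.2, fun h => ⟨h ▸ mem_powerset.1 hI, h⟩⟩

def blockIndex (K : Finset ℕ) (p : ℕ) : ℕ := #{i ∈ K | i < p}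

section BlockIndex

variable {K : Finset ℕ}

theorem blockIndex_mono (K : Finset ℕ) : Monotone (blockIndex K) :=
  fun _ _ hpq => card_le_card (monotone_filter_right K fun _ _ hi => hi.trans_le hpq)

theorem blockIndex_succ_of_notMem {p : ℕ} (hp : p ∉ K) :
    blockIndex K (p + 1) = blockIndex K p := by
  unfold blockIndex
  congr 1
  refine filter_congr fun i hi => ⟨fun h => ?_, fun h => h.trans (Nat.lt_succ_self p)⟩
  exact lt_of_le_of_ne (Nat.lt_succ_iff.1 h) (ne_of_mem_of_not_mem hi hp)

theorem blockIndex_lt_of_mem {i p : ℕ} (hi : i ∈ K) (hp : p ≤ i) :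
    blockIndex K p < blockIndex K (i + 1) := by
  refine card_lt_card ⟨monotone_filter_right K fun _ _ h => h.trans_le (by omega), fun h => ?_⟩
  have := (mem_filter.1 (h (mem_filter.2 ⟨hi, Nat.lt_succ_self i⟩))).2
  omega

theorem notMem_of_blockIndex_eq {p i q : ℕ} (hpi : p ≤ i) (hiq : i < q)
    (h : blockIndex K p = blockIndex K q) : i ∉ K := fun hi =>
  ((blockIndex_lt_of_mem hi hpi).trans_le (blockIndex_mono K hiq)).ne h

theorem blockIndex_insert_of_le {i p : ℕ} (hp : p ≤ i) :
    blockIndex (insert i K) p = blockIndex K p := by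
  unfold blockIndex
  rw [filter_insert, if_neg (by omega)]

end BlockIndex

def blockWord (K : Finset ℕ) (m : ℕ) (p : Fin m) : ℕ := blockIndex K p

theorem monotone_blockWord (K : Finset ℕ) (m : ℕ) : Monotone (blockWord K m) :=
  fun _ _ h => blockIndex_mono K h

section Descents

variable {m : ℕ}

theorem mem_descSet_iff {σ : Equiv.Perm (Fin m)} {i : ℕ} :
    i ∈ descSet σ ↔
      ∃ h : i + 1 < m, σ ⟨i + 1, h⟩ < σ ⟨i, Nat.lt_of_succ_lt h⟩ := by
  simp only [descSet, descSeq, mem_filter, mem_range, Fin.lt_def]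
  exact ⟨fun h => h.2, fun h => ⟨by obtain ⟨h, _⟩ := h; omega, h⟩⟩

theorem descSet_subset_range (σ : Equiv.Perm (Fin m)) : descSet σ ⊆ range (m - 1) :=
  filter_subset _ _

theorem descSet_subset_iff {σ : Equiv.Perm (Fin m)} {K : Finset ℕ} :
    descSet σ ⊆ K ↔
      ∀ ⦃p q : Fin m⦄, p < q → blockWord K m p = blockWord K m q → σ p < σ q := by
  refine ⟨fun hσ p q hpq h => ?_, fun h i hi => ?_⟩
  · obtain ⟨q, hq⟩ := q
    induction q with
    | zero => exact absurd (Fin.lt_def.1 hpq) (Nat.not_lt_zero _)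
    | succ q ih =>
      have hq' : q < m := by omega
      have hpq' : (p : ℕ) ≤ q := Nat.lt_succ_iff.1 (Fin.lt_def.1 hpq)
      have hqK : q ∉ K := notMem_of_blockIndex_eq hpq' (Nat.lt_succ_self q) h
      have hstep : σ ⟨q, hq'⟩ < σ ⟨q + 1, hq⟩ := by
        refine lt_of_le_of_ne (not_lt.1 fun hd => hqK (hσ (mem_descSet_iff.2 ⟨hq, hd⟩))) ?_
        exact σ.injective.ne (by simp)
      rcases hpq'.eq_or_lt with hpq' | hpq'
      · rwa [show p = ⟨q, hq'⟩ from Fin.ext hpq']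
      · refine (ih hq' hpq' (le_antisymm ?_ ?_)).trans hstep
        · exact blockIndex_mono K (Nat.le_of_lt hpq')
        · exact h ▸ blockIndex_mono K (Nat.le_succ q)
  · obtain ⟨_, hdesc⟩ := mem_descSet_iff.1 hi
    by_contra hiK
    exact (h (Fin.mk_lt_mk.2 (Nat.lt_succ_self i)) (blockIndex_succ_of_notMem hiK).symm).not_gt
      hdesc

end Descents

section Standardization

variable {m : ℕ} {J : Finset ℕ}

theorem comp_sort_eq_blockWord {g : Fin m → ℕ} (hg : List.ofFn g ~ List.ofFn (blockWord J m)) :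
    g ∘ Tuple.sort g = blockWord J m :=
  eq_of_ofFn_perm_of_monotone ((Equiv.Perm.ofFn_comp_perm _ g).trans hg) (Tuple.monotone_sort g)
    (monotone_blockWord J m)

theorem descSet_sort_subset {g : Fin m → ℕ} (hg : List.ofFn g ~ List.ofFn (blockWord J m)) :
    descSet (Tuple.sort g) ⊆ J := by
  have hc := comp_sort_eq_blockWord hg
  refine descSet_subset_iff.2 fun p q hpq h => (Tuple.eq_sort_iff.1 rfl).2 p q hpq ?_
  exact (congrFun hc p).trans (h.trans (congrFun hc q).symm)

variable (J) in
def descSetSubsetEquiv : {σ : Equiv.Perm (Fin m) // descSet σ ⊆ J} ≃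
    {g : Fin m → ℕ // List.ofFn g ~ List.ofFn (blockWord J m)} where
  toFun σ := ⟨blockWord J m ∘ ⇑σ.1⁻¹, σ.1⁻¹.ofFn_comp_perm _⟩
  invFun g := ⟨Tuple.sort g.1, descSet_sort_subset g.2⟩
  left_inv := by
    rintro ⟨σ, hσ⟩
    refine Subtype.ext (Tuple.eq_sort_iff.2 ⟨fun p q h => ?_, fun p q hpq h => ?_⟩).symm
    · simpa using monotone_blockWord J m h
    · exact descSet_subset_iff.1 hσ hpq (by simpa using h)
  right_inv := by
    rintro ⟨g, hg⟩
    refine Subtype.ext (funext fun v => ?_)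
    simpa using (congrFun (comp_sort_eq_blockWord hg) ((Tuple.sort g)⁻¹ v)).symm

end Standardization

section CyclicPermutation

open Equiv

variable {n : ℕ}

theorem finRotate_pow_apply (k : ℕ) (j : Fin (n + 1)) : (finRotate (n + 1) ^ k) j = j + k := by
  induction k with
  | zero => simp
  | succ k ih =>
    rw [pow_succ', Perm.mul_apply, ih, finRotate_apply, Nat.cast_succ, add_assoc]

theorem conj_finRotate_pow_apply (u : Perm (Fin (n + 1))) (k : ℕ) (j : Fin (n + 1)) :
    ((u * finRotate (n + 1) * u⁻¹) ^ k) (u j) = u (j + k) := by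
  simp [conj_pow, finRotate_pow_apply]

theorem isCyclic'_conj_finRotate (u : Perm (Fin (n + 1))) :
    IsCyclic' (u * finRotate (n + 1) * u⁻¹) :=
  fun x y => ⟨(u⁻¹ y - u⁻¹ x).val, by
    simpa using conj_finRotate_pow_apply u (u⁻¹ y - u⁻¹ x).val (u⁻¹ x)⟩

theorem IsCyclic'.exists_conj_finRotate {ρ : Perm (Fin (n + 1))} (hρ : IsCyclic' ρ)
    (x : Fin (n + 1)) :
    ∃ u : Perm (Fin (n + 1)), u 0 = x ∧ u * finRotate (n + 1) * u⁻¹ = ρ := by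
  rcases n with _ | n
  · exact ⟨1, Subsingleton.elim (α := Fin 1) _ _, Subsingleton.elim (α := Perm (Fin 1)) _ _⟩
  have hmove : ∀ y, ρ y ≠ y := fun y hy => by
    obtain ⟨k, hk⟩ := hρ y (y + 1)
    rw [Perm.pow_apply_eq_self_of_apply_eq_self hy] at hk
    simp at hk
  have hcycle : ρ.IsCycle :=
    ⟨0, hmove 0, fun y _ => let ⟨k, hk⟩ := hρ 0 y; ⟨k, by simpa using hk⟩⟩
  have hsupport : ρ.support = univ := eq_univ_of_forall fun y => Perm.mem_support.2 (hmove y)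
  obtain ⟨c, hc⟩ :=
    isConj_iff.1 (isCycle_finRotate.isConj hcycle (by rw [support_finRotate, hsupport]))
  refine ⟨c * finRotate (n + 2) ^ (c⁻¹ x).val, by simp [finRotate_pow_apply], ?_⟩
  rw [← hc]
  group

end CyclicPermutation

section CyclicShift

variable {n : ℕ}

def cyclicShift {α : Type*} (w : Fin (n + 1) → α) (j : Fin (n + 1)) : Lex (ℕ → α) :=
  toLex fun i => w (j + i)

variable {α : Type*} {w : Fin (n + 1) → α}

theorem cyclicShift_injective (h : ∀ j, w j = w 0 → j = 0) : Injective (cyclicShift w) := by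
  intro a b hab
  have hval := congrFun (congrArg ofLex hab) (-a).val
  simp only [cyclicShift, ofLex_toLex, Fin.cast_val_eq_self, add_neg_cancel] at hval
  exact (add_neg_eq_zero.1 (h _ hval.symm)).symm

variable [LinearOrder α]

theorem apply_le_of_cyclicShift_le {a b : Fin (n + 1)} (h : cyclicShift w a ≤ cyclicShift w b) :
    w a ≤ w b := by
  simpa [cyclicShift] using Pi.apply_le_of_toLex (i := 0) h (by simp)

theorem cyclicShift_lt_cyclicShift_iff_add_one {a b : Fin (n + 1)} (h : w a = w b) :
    cyclicShift w a < cyclicShift w b ↔ cyclicShift w (a + 1) < cyclicShift w (b + 1) := by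
  have hsucc (j : Fin (n + 1)) :
      cyclicShift w (j + 1) = toLex fun i : ℕ => w (j + (i + 1 : ℕ)) := by
    simp only [cyclicShift, Nat.cast_succ, add_right_comm _ (1 : Fin (n + 1)), add_assoc]
  rw [hsucc, hsucc]
  exact Pi.toLex_lt_toLex_iff_of_apply_zero_eq (by simpa using h)

noncomputable def shiftRank (w : Fin (n + 1) → α) : Equiv.Perm (Fin (n + 1)) :=
  (Tuple.sort (cyclicShift w))⁻¹

noncomputable def cycleOfWord (w : Fin (n + 1) → α) : Equiv.Perm (Fin (n + 1)) :=
  shiftRank w * finRotate (n + 1) * (shiftRank w)⁻¹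

def wordOfCycle {α : Type*} (s : Fin (n + 1) → α) (ρ : Equiv.Perm (Fin (n + 1))) :
    Fin (n + 1) → α :=
  fun j => s ((ρ ^ (j : ℕ)) (Fin.last n))

end CyclicShift

section CycleOfWord

variable {n : ℕ} {K : Finset ℕ} {w : Fin (n + 1) → ℕ}

theorem blockWord_shiftRank (hw : List.ofFn w ~ List.ofFn (blockWord K (n + 1))) (j : Fin (n + 1)) :
    blockWord K (n + 1) (shiftRank w j) = w j := by
  have hsorted : w ∘ Tuple.sort (cyclicShift w) = blockWord K (n + 1) :=
    eq_of_ofFn_perm_of_monotone ((Equiv.Perm.ofFn_comp_perm _ w).trans hw)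
      (fun x y h => apply_le_of_cyclicShift_le (w := w) (a := Tuple.sort _ x) (b := Tuple.sort _ y)
        (Tuple.monotone_sort (cyclicShift w) h)) (monotone_blockWord K _)
  simpa [shiftRank] using (congrFun hsorted (shiftRank w j)).symm

variable (htop : ∀ p, blockWord K (n + 1) p = blockWord K (n + 1) (Fin.last n) → p = Fin.last n)
  (hw : List.ofFn w ~ List.ofFn (blockWord K (n + 1)))
  (hw0 : w 0 = blockWord K (n + 1) (Fin.last n))
include htop hw hw0

theorem shiftRank_zero : shiftRank w 0 = Fin.last n :=
  htop _ ((blockWord_shiftRank hw 0).trans hw0)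

theorem eq_zero_of_apply_eq_apply_zero {j : Fin (n + 1)} (h : w j = w 0) : j = 0 :=
  (shiftRank w).injective <| (htop _ ((blockWord_shiftRank hw j).trans (h.trans hw0))).trans
    (shiftRank_zero htop hw hw0).symm

theorem shiftRank_lt_shiftRank_iff {a b : Fin (n + 1)} :
    shiftRank w a < shiftRank w b ↔ cyclicShift w a < cyclicShift w b := by
  have hmono : StrictMono (cyclicShift w ∘ Tuple.sort (cyclicShift w)) :=
    (Tuple.monotone_sort _).strictMono_of_injective
      ((cyclicShift_injective fun _ => eq_zero_of_apply_eq_apply_zero htop hw hw0).comp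
        (Equiv.injective _))
  have := hmono.lt_iff_lt (a := shiftRank w a) (b := shiftRank w b)
  simp only [shiftRank, comp_apply, Equiv.Perm.coe_inv, Equiv.apply_symm_apply] at this
  exact this.symm

theorem descSet_cycleOfWord_subset : descSet (cycleOfWord w) ⊆ K := by
  refine descSet_subset_iff.2 fun p q hpq h => ?_
  obtain ⟨a, rfl⟩ := (shiftRank w).surjective p
  obtain ⟨b, rfl⟩ := (shiftRank w).surjective q
  have hab : w a = w b := by
    rw [← blockWord_shiftRank hw a, ← blockWord_shiftRank hw b]
    exact h
  have hshift := (cyclicShift_lt_cyclicShift_iff_add_one hab).1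
    ((shiftRank_lt_shiftRank_iff htop hw hw0).1 hpq)
  simpa [cycleOfWord, finRotate_apply] using (shiftRank_lt_shiftRank_iff htop hw hw0).2 hshift

theorem wordOfCycle_cycleOfWord : wordOfCycle (blockWord K (n + 1)) (cycleOfWord w) = w := by
  funext j
  rw [wordOfCycle, cycleOfWord, ← shiftRank_zero htop hw hw0, conj_finRotate_pow_apply, zero_add,
    Fin.cast_val_eq_self, blockWord_shiftRank hw]

end CycleOfWord

section WordOfCycle

variable {n : ℕ} {K : Finset ℕ}

theorem wordOfCycle_conj_finRotate {α : Type*} (s : Fin (n + 1) → α)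
    {u : Equiv.Perm (Fin (n + 1))} (hu0 : u 0 = Fin.last n) :
    wordOfCycle s (u * finRotate (n + 1) * u⁻¹) = s ∘ u := by
  funext j
  rw [wordOfCycle, ← hu0, conj_finRotate_pow_apply, zero_add, Fin.cast_val_eq_self, comp_apply]

theorem ofFn_wordOfCycle_perm {α : Type*} (s : Fin (n + 1) → α) {ρ : Equiv.Perm (Fin (n + 1))}
    (hρ : IsCyclic' ρ) : List.ofFn (wordOfCycle s ρ) ~ List.ofFn s := by
  obtain ⟨u, hu0, rfl⟩ := hρ.exists_conj_finRotate (Fin.last n)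
  rw [wordOfCycle_conj_finRotate s hu0]
  exact u.ofFn_comp_perm s

variable (htop : ∀ p, blockWord K (n + 1) p = blockWord K (n + 1) (Fin.last n) → p = Fin.last n)
include htop

theorem cyclicShift_lt_cyclicShift_of_lt {u : Equiv.Perm (Fin (n + 1))} (hu0 : u 0 = Fin.last n)
    (hK : descSet (u * finRotate (n + 1) * u⁻¹) ⊆ K) {a b : Fin (n + 1)} (hab : u a < u b) :
    cyclicShift (blockWord K (n + 1) ∘ u) a < cyclicShift (blockWord K (n + 1) ∘ u) b := by
  set w := blockWord K (n + 1) ∘ u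
  have hstep {j j' : Fin (n + 1)} (hlt : u j < u j') (heq : w j = w j') :
      u (j + 1) < u (j' + 1) := by
    simpa [finRotate_apply] using descSet_subset_iff.1 hK hlt heq
  have hdiff : ∃ i : ℕ, w (a + i) ≠ w (b + i) := by
    refine ⟨(-a).val, fun h => hab.ne ?_⟩
    simp only [Fin.cast_val_eq_self, add_neg_cancel] at h
    have hba : b + -a = 0 := u.injective ((htop _ (h.symm.trans (by simp [w, hu0]))).trans hu0.symm)
    rw [(add_neg_eq_zero.1 hba)]
  classical
  have hprefix : ∀ i ≤ Nat.find hdiff, u (a + i) < u (b + i) := by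
    intro i hi
    induction i with
    | zero => simpa using hab
    | succ i ih =>
      simpa [add_assoc] using hstep (ih (by omega)) (not_not.1 (Nat.find_min hdiff (by omega)))
  refine ⟨Nat.find hdiff, fun i hi => not_not.1 (Nat.find_min hdiff hi), ?_⟩
  exact lt_of_le_of_ne (monotone_blockWord K _ (hprefix _ le_rfl).le) (Nat.find_spec hdiff)

theorem cycleOfWord_wordOfCycle {ρ : Equiv.Perm (Fin (n + 1))} (hρ : IsCyclic' ρ)
    (hK : descSet ρ ⊆ K) : cycleOfWord (wordOfCycle (blockWord K (n + 1)) ρ) = ρ := by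
  obtain ⟨u, hu0, rfl⟩ := hρ.exists_conj_finRotate (Fin.last n)
  have hlt {p q : Fin (n + 1)} (hpq : p < q) := cyclicShift_lt_cyclicShift_of_lt htop hu0 hK
    (a := u⁻¹ p) (b := u⁻¹ q) (by simpa using hpq)
  have hsort : u⁻¹ = Tuple.sort (cyclicShift (blockWord K (n + 1) ∘ u)) := by
    refine Tuple.eq_sort_iff.2 ⟨fun p q hpq => ?_, fun p q hpq h => ((hlt hpq).ne h).elim⟩
    rcases hpq.eq_or_lt with rfl | hpq
    exacts [le_rfl, (hlt hpq).le]
  rw [wordOfCycle_conj_finRotate _ hu0, cycleOfWord, shiftRank, ← hsort, inv_inv]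

variable (K) in
noncomputable def cyclicDescSetSubsetEquiv :
    {ρ : Equiv.Perm (Fin (n + 1)) // IsCyclic' ρ ∧ descSet ρ ⊆ K} ≃
      {w : Fin (n + 1) → ℕ // List.ofFn w ~ List.ofFn (blockWord K (n + 1)) ∧
        w 0 = blockWord K (n + 1) (Fin.last n)} where
  toFun ρ := ⟨wordOfCycle (blockWord K (n + 1)) ρ.1, ofFn_wordOfCycle_perm _ ρ.2.1, by
    simp [wordOfCycle]⟩
  invFun w := ⟨cycleOfWord w.1, isCyclic'_conj_finRotate _,
    descSet_cycleOfWord_subset htop w.2.1 w.2.2⟩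
  left_inv ρ := Subtype.ext (cycleOfWord_wordOfCycle htop ρ.2.1 ρ.2.2)
  right_inv w := Subtype.ext (wordOfCycle_cycleOfWord htop w.2.1 w.2.2)

end WordOfCycle

def consWordEquiv {α : Type*} {n : ℕ} (f : Fin (n + 1) → α) :
    {w : Fin (n + 1) → α // List.ofFn w ~ List.ofFn f ∧ w 0 = f (Fin.last n)} ≃
      {g : Fin n → α // List.ofFn g ~ List.ofFn (f ∘ Fin.castSucc)} where
  toFun w := ⟨Fin.tail w.1, by
    obtain ⟨w, hw, hw0⟩ := w
    rw [List.ofFn_succ, hw0, List.ofFn_succ', List.concat_eq_append] at hw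
    exact (List.perm_cons _).1 (hw.trans (List.perm_append_singleton _ _))⟩
  invFun g := ⟨Fin.cons (f (Fin.last n)) g.1, by
    rw [List.ofFn_succ, List.ofFn_succ', List.concat_eq_append]
    exact ((List.perm_cons _).2 g.2).trans (List.perm_append_singleton _ _).symm, rfl⟩
  left_inv w := Subtype.ext (by simp [← w.2.2])
  right_inv g := rfl

theorem eq_last_of_blockWord_insert_eq {n : ℕ} {J : Finset ℕ} {p : Fin (n + 1)}
    (hp : blockWord (insert (n - 1) J) (n + 1) p =
      blockWord (insert (n - 1) J) (n + 1) (Fin.last n)) : p = Fin.last n := by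
  by_contra hne
  have hpn := Fin.val_lt_last hne
  have hlt := blockIndex_lt_of_mem (mem_insert_self (n - 1) J) (show (p : ℕ) ≤ n - 1 by omega)
  rw [Nat.sub_add_cancel (by omega : 1 ≤ n)] at hlt
  exact hlt.ne hp

theorem blockWord_insert_comp_castSucc (n : ℕ) (J : Finset ℕ) :
    blockWord (insert (n - 1) J) (n + 1) ∘ Fin.castSucc = blockWord J n :=
  funext fun p => blockIndex_insert_of_le (show (p : ℕ) ≤ n - 1 by omega)

theorem descSet_inter_range_subset_iff {n : ℕ} {J : Finset ℕ} {π : Equiv.Perm (Fin (n + 1))} :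
    descSet π ∩ range (n - 1) ⊆ J ↔ descSet π ⊆ insert (n - 1) J := by
  refine ⟨fun h x hx => ?_, fun h x hx => ?_⟩
  · have hxn := mem_range.1 (descSet_subset_range π hx)
    rcases (show x < n - 1 ∨ x = n - 1 by omega) with hx' | rfl
    · exact mem_insert_of_mem (h (mem_inter.2 ⟨hx, mem_range.2 hx'⟩))
    · exact mem_insert_self _ _
  · obtain ⟨hxD, hxr⟩ := mem_inter.1 hx
    exact (mem_insert.1 (h hxD)).resolve_left (by rw [mem_range] at hxr; omega)

theorem card_cyclic_descSet_subset (n : ℕ) (J : Finset ℕ) :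
    Nat.card {π : Equiv.Perm (Fin (n + 1)) //
        IsCyclic' π ∧ descSet π ∩ range (n - 1) ⊆ J} =
      Nat.card {σ : Equiv.Perm (Fin n) // descSet σ ⊆ J} := by
  calc _ = Nat.card {π : Equiv.Perm (Fin (n + 1)) //
          IsCyclic' π ∧ descSet π ⊆ insert (n - 1) J} :=
        Nat.card_congr (Equiv.subtypeEquivRight fun _ =>
          and_congr_right fun _ => descSet_inter_range_subset_iff)
    _ = Nat.card {g : Fin n → ℕ // List.ofFn g ~ List.ofFn (blockWord J n)} :=
        Nat.card_congr <| (cyclicDescSetSubsetEquiv _ fun _ => eq_last_of_blockWord_insert_eq).trans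
          ((consWordEquiv _).trans
            (Equiv.subtypeEquivRight fun _ => by rw [blockWord_insert_comp_castSucc]))
    _ = _ := (Nat.card_congr (descSetSubsetEquiv J)).symm

theorem stmt1_general (n : ℕ) (I : Finset ℕ) :
    Nat.card {π : Equiv.Perm (Fin (n + 1)) //
        IsCyclic' π ∧ descSet π ∩ Finset.range (n - 1) = I}
      = Nat.card {σ : Equiv.Perm (Fin n) // descSet σ = I} := by
  revert I
  refine funext_iff.1 (Finset.eq_of_forall_sum_powerset_eq fun K => ?_)
  have hperm := Nat.card_subtype_subset_eq_sum (fun _ : Equiv.Perm (Fin n) => True) descSet K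
  simp only [true_and] at hperm
  rw [← Nat.card_subtype_subset_eq_sum, ← hperm]
  exact card_cyclic_descSet_subset n K

theorem stmt1 (n : ℕ) (hn : 1 ≤ n) (I : Finset ℕ) (hI : I ⊆ Finset.range (n - 1)) :
    Nat.card {π : Equiv.Perm (Fin (n + 1)) //
        IsCyclic' π ∧ descSet π ∩ Finset.range (n - 1) = I}
      = Nat.card {σ : Equiv.Perm (Fin n) // descSet σ = I} :=
  stmt1_general n I
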